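/- arXiv:2503.23403 — 3 statements merged into one kernel-verified Lean document; each statement's English description precedes it below -/
import Mathlib

section
/- For any probability measure μ on ℝ with finite second moment ρ² and any z in the upper half-plane, let G_μ(z) = ∫ 1/(z−x) dμ(x). Then |z·G_μ(z) − 1| ≤ (ρ/√(Im z)) · |G_μ(z)|^{1/2}. -/
open MeasureTheory Complex

/-! Since `z G_μ(z) - 1 = ∫ x / (z - x) dμ`, Cauchy–Schwarz bounds `|z G_μ(z) - 1|` by
`ρ (∫ |z - x|⁻² dμ)^{1/2}`. Taking imaginary parts in `G_μ(z) = ∫ (z̄ - x) / |z - x|² dμ` gives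
`Im z · ∫ |z - x|⁻² dμ = -Im G_μ(z) ≤ |G_μ(z)|`. -/

theorem norm_integral_smul_le_sqrt_mul_sqrt {α E : Type*} [MeasurableSpace α] {μ : Measure α}
    [NormedAddCommGroup E] [NormedSpace ℝ E] {f : α → ℝ} {g : α → E}
    (hf : MemLp f 2 μ) (hg : MemLp g 2 μ) :
    ‖∫ a, f a • g a ∂μ‖ ≤ √(∫ a, f a ^ 2 ∂μ) * √(∫ a, ‖g a‖ ^ 2 ∂μ) := by
  have hp : ENNReal.ofReal 2 = 2 := by norm_num
  have holder := integral_mul_le_Lp_mul_Lq_of_nonneg Real.HolderConjugate.two_two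
    (Filter.Eventually.of_forall fun a => abs_nonneg (f a))
    (Filter.Eventually.of_forall fun a => norm_nonneg (g a)) (hp ▸ hf.abs) (hp ▸ hg.norm)
  simp only [Real.rpow_two, sq_abs, ← Real.sqrt_eq_rpow] at holder
  calc ‖∫ a, f a • g a ∂μ‖ ≤ ∫ a, ‖f a • g a‖ ∂μ := norm_integral_le_integral_norm _
    _ = ∫ a, |f a| * ‖g a‖ ∂μ := by simp only [norm_smul, Real.norm_eq_abs]
    _ ≤ _ := holder

noncomputable def cauchyTransform (μ : Measure ℝ) (z : ℂ) : ℂ := ∫ x : ℝ, 1 / (z - x) ∂μ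

section CauchyTransform

variable {μ : Measure ℝ} {z : ℂ}

theorem abs_im_le_norm_sub_ofReal (z : ℂ) (x : ℝ) : |z.im| ≤ ‖z - x‖ := by
  simpa using abs_im_le_norm (z - x)

theorem norm_one_div_sub_ofReal_le (hz : z.im ≠ 0) (x : ℝ) : ‖1 / (z - x)‖ ≤ |z.im|⁻¹ := by
  rw [norm_div, norm_one, one_div]
  exact inv_anti₀ (abs_pos.2 hz) (abs_im_le_norm_sub_ofReal z x)

theorem memLp_one_div_sub_ofReal [IsFiniteMeasure μ] (hz : z.im ≠ 0) (p : ENNReal) :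
    MemLp (fun x : ℝ => 1 / (z - x)) p μ :=
  MemLp.of_bound (by fun_prop : Measurable fun x : ℝ => 1 / (z - x)).aestronglyMeasurable _
    (Filter.Eventually.of_forall (norm_one_div_sub_ofReal_le hz))

theorem im_one_div_sub_ofReal (z : ℂ) (x : ℝ) :
    (1 / (z - x)).im = -z.im * ‖1 / (z - x)‖ ^ 2 := by
  rw [norm_div, norm_one, div_pow, ← normSq_eq_norm_sq, one_div, inv_im]
  simp [div_eq_mul_inv]

theorem im_cauchyTransform [IsFiniteMeasure μ] (hz : z.im ≠ 0) :
    (cauchyTransform μ z).im = -z.im * ∫ x : ℝ, ‖1 / (z - x)‖ ^ 2 ∂μ := by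
  calc (cauchyTransform μ z).im = ∫ x : ℝ, (1 / (z - x)).im ∂μ :=
        (integral_im (memLp_one_iff_integrable.1 (memLp_one_div_sub_ofReal hz 1))).symm
    _ = ∫ x : ℝ, -z.im * ‖1 / (z - x)‖ ^ 2 ∂μ :=
        integral_congr_ae (Filter.Eventually.of_forall (im_one_div_sub_ofReal z))
    _ = _ := integral_const_mul _ _

theorem integral_norm_one_div_sub_ofReal_sq_le [IsFiniteMeasure μ] (hz : 0 < z.im) :
    ∫ x : ℝ, ‖1 / (z - x)‖ ^ 2 ∂μ ≤ ‖cauchyTransform μ z‖ / z.im := by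
  rw [le_div_iff₀ hz, mul_comm]
  have him := im_cauchyTransform (μ := μ) hz.ne'
  linarith [neg_le_abs (cauchyTransform μ z).im, abs_im_le_norm (cauchyTransform μ z)]

theorem mul_cauchyTransform_sub_one [IsProbabilityMeasure μ] (hz : z.im ≠ 0) :
    z * cauchyTransform μ z - 1 = ∫ x : ℝ, x • (1 / (z - x)) ∂μ := by
  have hint := memLp_one_iff_integrable.1 (memLp_one_div_sub_ofReal (μ := μ) hz 1)
  calc z * cauchyTransform μ z - 1
      = ∫ x : ℝ, z * (1 / (z - x)) ∂μ - ∫ _ : ℝ, (1 : ℂ) ∂μ := by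
        rw [integral_const_mul, integral_const, probReal_univ, one_smul, cauchyTransform]
    _ = ∫ x : ℝ, (z * (1 / (z - x)) - 1) ∂μ :=
        (integral_sub (hint.const_mul z) (integrable_const _)).symm
    _ = _ := integral_congr_ae (Filter.Eventually.of_forall fun x => by
        have hne : z - x ≠ 0 := fun h => hz (by simpa using congrArg im h)
        rw [real_smul]
        field_simp
        ring)

end CauchyTransform

theorem stmt_3 (μ : Measure ℝ) [IsProbabilityMeasure μ] (ρ : ℝ) (hρ : 0 ≤ ρ)
    (hint : Integrable (fun x : ℝ => x ^ 2) μ)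
    (hvar : ∫ x, x ^ 2 ∂μ = ρ ^ 2)
    (z : ℂ) (hz : 0 < z.im) :
    ‖z * (∫ x : ℝ, 1 / (z - x) ∂μ) - 1‖ ≤
      ρ / Real.sqrt z.im * (‖∫ x : ℝ, 1 / (z - x) ∂μ‖) ^ ((1 : ℝ) / 2) := by
  have hx : MemLp (fun x : ℝ => x) 2 μ :=
    (memLp_two_iff_integrable_sq aestronglyMeasurable_id).2 hint
  change ‖z * cauchyTransform μ z - 1‖ ≤ ρ / √z.im * ‖cauchyTransform μ z‖ ^ ((1 : ℝ) / 2)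
  calc ‖z * cauchyTransform μ z - 1‖
      ≤ √(∫ x, x ^ 2 ∂μ) * √(∫ x : ℝ, ‖1 / (z - x)‖ ^ 2 ∂μ) := by
        rw [mul_cauchyTransform_sub_one hz.ne']
        exact norm_integral_smul_le_sqrt_mul_sqrt hx (memLp_one_div_sub_ofReal hz.ne' 2)
    _ ≤ √(ρ ^ 2) * √(‖cauchyTransform μ z‖ / z.im) := by
        rw [hvar]
        gcongr
        exact integral_norm_one_div_sub_ofReal_sq_le hz
    _ = ρ / √z.im * ‖cauchyTransform μ z‖ ^ ((1 : ℝ) / 2) := by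
        rw [Real.sqrt_sq hρ, Real.sqrt_div' _ hz.le, Real.sqrt_eq_rpow]
        ring
end

section
/- Let μ and ν be probability measures on ℝ with Cauchy transforms G_μ and G_ν, and let Δ(μ,ν) = sup_x |μ((−∞,x]) − ν((−∞,x])| denote their Kolmogorov distance. Then for every z in the upper half-plane, |G_μ(z) − G_ν(z)| ≤ π·Δ(μ,ν)/Im z. -/
open MeasureTheory Complex

/-- The Kolmogorov distance between two Borel measures on `ℝ`. -/
noncomputable def kolDist (μ ν : Measure ℝ) : ℝ :=
  ⨆ x : ℝ, |(μ (Set.Iic x)).toReal - (ν (Set.Iic x)).toReal|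

/-!
Integrating by parts against the distribution function `F_μ t = μ (-∞, t]` gives
`G_μ z = -∫ F_μ t / (z - t)² dt`, hence `‖G_μ z - G_ν z‖ ≤ Δ(μ, ν) ∫ |z - t|⁻² dt`.
The kernel `|z - t|⁻²` is `π / Im z` times the Cauchy density with location `Re z` and
scale `Im z`, so the last integral equals `π / Im z`.
-/

open Set Filter Topology ProbabilityTheory

section IntegrationByParts

variable {E : Type*} [NormedAddCommGroup E] [NormedSpace ℝ E] {f f' : ℝ → E}

theorem integral_eq_neg_integral_measure_Iic_smul_deriv [CompleteSpace E]
    (μ : Measure ℝ) [IsFiniteMeasure μ]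
    (hf : ∀ t, HasDerivAt f (f' t) t) (hf' : Integrable f') (hf_top : Tendsto f atTop (𝓝 0)) :
    ∫ x, f x ∂μ = -∫ t, (μ (Iic t)).toReal • f' t := by
  -- Fubini for `f'` restricted to the region `x ≤ t`.
  set g : ℝ × ℝ → E := {p | p.1 ≤ p.2}.indicator fun p ↦ f' p.2
  have hg : Integrable g (μ.prod volume) :=
    (hf'.comp_snd μ).indicator (measurableSet_le measurable_fst measurable_snd)
  have h_inner_t (x : ℝ) : ∫ t, g (x, t) = -f x := by
    have : (fun t ↦ g (x, t)) = (Ici x).indicator f' := by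
      ext t; by_cases h : x ≤ t <;> simp [g, h]
    rw [this, integral_indicator measurableSet_Ici, integral_Ici_eq_integral_Ioi,
      integral_Ioi_of_hasDerivAt_of_tendsto' (fun t _ ↦ hf t) hf'.integrableOn hf_top, zero_sub]
  have h_inner_x (t : ℝ) : ∫ x, g (x, t) ∂μ = (μ (Iic t)).toReal • f' t := by
    have : (fun x ↦ g (x, t)) = (Iic t).indicator fun _ ↦ f' t := by
      ext x; by_cases h : x ≤ t <;> simp [g, h]
    rw [this, integral_indicator_const _ measurableSet_Iic, measureReal_def]
  calc ∫ x, f x ∂μ = -∫ x, (∫ t, g (x, t)) ∂μ := by simp only [h_inner_t, integral_neg, neg_neg]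
    _ = -∫ t, ∫ x, g (x, t) ∂μ := by rw [integral_integral_swap (f := fun x t ↦ g (x, t)) hg]
    _ = -∫ t, (μ (Iic t)).toReal • f' t := by simp only [h_inner_x]

theorem abs_measure_Iic_sub_le_kolDist (μ ν : Measure ℝ) [IsProbabilityMeasure μ]
    [IsProbabilityMeasure ν] (t : ℝ) :
    |(μ (Iic t)).toReal - (ν (Iic t)).toReal| ≤ kolDist μ ν := by
  refine le_ciSup (f := fun x ↦ |(μ (Iic x)).toReal - (ν (Iic x)).toReal|) ⟨1, ?_⟩ t
  rintro _ ⟨x, rfl⟩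
  have hμ : (μ (Iic x)).toReal ≤ 1 := measureReal_le_one
  have hν : (ν (Iic x)).toReal ≤ 1 := measureReal_le_one
  exact abs_sub_le_of_nonneg_of_le ENNReal.toReal_nonneg hμ ENNReal.toReal_nonneg hν

theorem integrable_measure_Iic_smul (μ : Measure ℝ) [IsFiniteMeasure μ]
    (hf' : Integrable f') : Integrable fun t ↦ (μ (Iic t)).toReal • f' t := by
  have h_mono : Monotone fun t ↦ (μ (Iic t)).toReal := fun s t hst ↦
    measureReal_mono (Iic_subset_Iic.mpr hst)
  refine hf'.bdd_smul (μ univ).toReal h_mono.measurable.aestronglyMeasurable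
    (ae_of_all _ fun t ↦ ?_)
  rw [Real.norm_of_nonneg ENNReal.toReal_nonneg]
  exact measureReal_mono (subset_univ _)

theorem norm_integral_sub_integral_le_kolDist_mul [CompleteSpace E] (μ ν : Measure ℝ) [IsProbabilityMeasure μ]
    [IsProbabilityMeasure ν] (hf : ∀ t, HasDerivAt f (f' t) t) (hf' : Integrable f')
    (hf_top : Tendsto f atTop (𝓝 0)) :
    ‖∫ x, f x ∂μ - ∫ x, f x ∂ν‖ ≤ kolDist μ ν * ∫ t, ‖f' t‖ := by
  rw [integral_eq_neg_integral_measure_Iic_smul_deriv μ hf hf' hf_top,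
    integral_eq_neg_integral_measure_Iic_smul_deriv ν hf hf' hf_top, neg_sub_neg,
    ← integral_sub (integrable_measure_Iic_smul ν hf') (integrable_measure_Iic_smul μ hf'),
    ← integral_const_mul]
  refine norm_integral_le_of_norm_le (hf'.norm.const_mul _) (ae_of_all _ fun t ↦ ?_)
  rw [← sub_smul, norm_smul, Real.norm_eq_abs, abs_sub_comm]
  exact mul_le_mul_of_nonneg_right (abs_measure_Iic_sub_le_kolDist μ ν t) (norm_nonneg _)

end IntegrationByParts

section CauchyKernel

variable {z : ℂ}

theorem sub_ofReal_ne_zero (hz : 0 < z.im) (t : ℝ) : z - t ≠ 0 := fun h ↦ by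
  simpa [hz.ne'] using congrArg im h

theorem hasDerivAt_inv_sub_ofReal (hz : 0 < z.im) (t : ℝ) :
    HasDerivAt (fun s : ℝ ↦ (z - s)⁻¹) ((z - t) ^ 2)⁻¹ t := by
  have := (((hasDerivAt_id (t : ℂ)).const_sub z).inv (sub_ofReal_ne_zero hz t)).comp_ofReal
  simpa using this

theorem tendsto_inv_sub_ofReal_atTop (z : ℂ) :
    Tendsto (fun s : ℝ ↦ (z - s)⁻¹) atTop (𝓝 0) :=
  tendsto_inv₀_cobounded.comp <|
    (tendsto_const_sub_cobounded z).comp (RCLike.tendsto_ofReal_atTop_cobounded ℂ)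

theorem norm_inv_sub_ofReal_sq (hz : 0 < z.im) (t : ℝ) :
    ‖((z - t) ^ 2)⁻¹‖ = Real.pi / z.im * cauchyPDFReal z.re z.im.toNNReal t := by
  rw [cauchyPDFReal_def, Real.coe_toNNReal _ hz.le, norm_inv, norm_pow, Complex.sq_norm, normSq_apply]
  simp only [sub_re, ofReal_re, sub_im, ofReal_im, sub_zero]
  field_simp
  ring

theorem integrable_inv_sub_ofReal_sq (hz : 0 < z.im) :
    Integrable fun t : ℝ ↦ ((z - t) ^ 2)⁻¹ := by
  have h_cont : Continuous fun t : ℝ ↦ ((z - t) ^ 2)⁻¹ :=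
    (by fun_prop : Continuous fun t : ℝ ↦ (z - t) ^ 2).inv₀
      fun t ↦ pow_ne_zero 2 (sub_ofReal_ne_zero hz t)
  rw [← integrable_norm_iff h_cont.aestronglyMeasurable]
  simp_rw [norm_inv_sub_ofReal_sq hz]
  exact (integrable_cauchyPDFReal _).const_mul _

theorem integral_norm_inv_sub_ofReal_sq (hz : 0 < z.im) :
    ∫ t : ℝ, ‖((z - t) ^ 2)⁻¹‖ = Real.pi / z.im := by
  simp_rw [norm_inv_sub_ofReal_sq hz]
  rw [integral_const_mul, integral_cauchyPDFReal_eq_one _ (by simpa using hz), mul_one]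

end CauchyKernel

theorem stmt_7 (μ ν : Measure ℝ) [IsProbabilityMeasure μ] [IsProbabilityMeasure ν]
    (z : ℂ) (hz : 0 < z.im) :
    ‖(∫ x : ℝ, 1 / (z - x) ∂μ) - ∫ x : ℝ, 1 / (z - x) ∂ν‖ ≤
      Real.pi * kolDist μ ν / z.im := by
  simp_rw [one_div]
  calc _ ≤ kolDist μ ν * ∫ t : ℝ, ‖((z - t) ^ 2)⁻¹‖ :=
        norm_integral_sub_integral_le_kolDist_mul μ ν (hasDerivAt_inv_sub_ofReal hz)
          (integrable_inv_sub_ofReal_sq hz) (tendsto_inv_sub_ofReal_atTop z)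
    _ = Real.pi * kolDist μ ν / z.im := by
        rw [integral_norm_inv_sub_ofReal_sq hz]; ring
end

section
/- For every z in the upper half-plane with |Re z| < 1 one has (Im √(z²−4))² = ((√(((Re z)²−(Im z)²−4)² + 4(Re z)²(Im z)²) − ((Re z)²−(Im z)²−4))/2) ≥ 1, where the square root branch cut is on [0,∞). In particular Im √(z²−4) ≥ 1. -/
open Complex

/-- The complex square root with branch cut on the non-negative real axis. -/
noncomputable def sqrtCut (z : ℂ) : ℂ := Complex.I * (-z) ^ ((1 : ℂ) / 2)

/-!
`sqrtCut w` is a square root of `w` lying in the closed upper half-plane. For any square root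
`u` of `w`, comparing `‖u‖² = ‖w‖` with `re (u²) = re u² - im u²` gives
`(im u)² = (‖w‖ - re w) / 2`, which for `w = z² - 4` is the displayed formula. The bound `≥ 1`
reduces to `(im (z² - 4))² ≥ 4 (re (z² - 4) + 1)`, i.e. `x²y² + y² + 3 - x² ≥ 0` for
`z = x + iy`, which holds as soon as `x² ≤ 3`.
-/

lemma sqrtCut_sq (w : ℂ) : sqrtCut w ^ 2 = w := by
  have h : ((-w) ^ ((1 : ℂ) / 2)) ^ 2 = -w := by
    rw [one_div]
    exact_mod_cast Complex.cpow_nat_inv_pow (-w) two_ne_zero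
  rw [sqrtCut, mul_pow, Complex.I_sq, h]
  ring

-- The principal argument lies in `(-π, π]`, so halving it lands in `[-π/2, π/2]`.
lemma Complex.cpow_one_half_re_nonneg (w : ℂ) : 0 ≤ (w ^ ((1 : ℂ) / 2)).re := by
  rcases eq_or_ne w 0 with rfl | hw
  · simp
  have him : (Complex.log w * (1 / 2)).im = w.arg / 2 := by
    simp [Complex.mul_im, Complex.log_im]
    ring
  rw [Complex.cpow_def_of_ne_zero hw, Complex.exp_re, him]
  have hcos : 0 ≤ Real.cos (w.arg / 2) :=
    Real.cos_nonneg_of_mem_Icc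
      ⟨by linarith [Complex.neg_pi_lt_arg w], by linarith [Complex.arg_le_pi w]⟩
  positivity

lemma sqrtCut_im_nonneg (w : ℂ) : 0 ≤ (sqrtCut w).im := by
  simpa only [sqrtCut, Complex.mul_im, Complex.I_re, Complex.I_im, zero_mul, one_mul, zero_add]
    using Complex.cpow_one_half_re_nonneg (-w)

lemma Complex.im_sq_of_sq_eq {u w : ℂ} (h : u ^ 2 = w) : u.im ^ 2 = (‖w‖ - w.re) / 2 := by
  have hnorm : ‖w‖ = u.re ^ 2 + u.im ^ 2 := by
    rw [← h, norm_pow, Complex.sq_norm, Complex.normSq_apply]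
    ring
  have hre : w.re = u.re ^ 2 - u.im ^ 2 := by
    simp [← h, pow_two]
  rw [hnorm, hre]
  ring

lemma re_sq_sub_four (z : ℂ) : (z ^ 2 - 4).re = z.re ^ 2 - z.im ^ 2 - 4 := by
  simp [pow_two]

lemma norm_sq_sub_four (z : ℂ) :
    ‖z ^ 2 - 4‖ = Real.sqrt ((z.re ^ 2 - z.im ^ 2 - 4) ^ 2 + 4 * z.re ^ 2 * z.im ^ 2) := by
  rw [Complex.norm_def, Complex.normSq_apply, re_sq_sub_four]
  congr 1
  simp only [Complex.sub_im, pow_two, Complex.mul_im, Complex.im_ofNat]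
  ring

lemma one_le_half_sqrt_sub {x y : ℝ} (hx : x ^ 2 ≤ 3) :
    1 ≤ (Real.sqrt ((x ^ 2 - y ^ 2 - 4) ^ 2 + 4 * x ^ 2 * y ^ 2) - (x ^ 2 - y ^ 2 - 4)) / 2 := by
  have hsqrt : x ^ 2 - y ^ 2 - 2 ≤ Real.sqrt ((x ^ 2 - y ^ 2 - 4) ^ 2 + 4 * x ^ 2 * y ^ 2) := by
    apply Real.le_sqrt_of_sq_le
    nlinarith [mul_nonneg (sq_nonneg x) (sq_nonneg y), sq_nonneg y]
  linarith

theorem stmt_11_general (z : ℂ) (hre : |z.re| < 1) :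
    (sqrtCut (z ^ 2 - 4)).im ^ 2 =
      (Real.sqrt ((z.re ^ 2 - z.im ^ 2 - 4) ^ 2 + 4 * z.re ^ 2 * z.im ^ 2)
        - (z.re ^ 2 - z.im ^ 2 - 4)) / 2 ∧
    1 ≤ (sqrtCut (z ^ 2 - 4)).im ^ 2 ∧
    1 ≤ (sqrtCut (z ^ 2 - 4)).im := by
  have him_sq := Complex.im_sq_of_sq_eq (sqrtCut_sq (z ^ 2 - 4))
  rw [norm_sq_sub_four, re_sq_sub_four] at him_sq
  have hre_sq : z.re ^ 2 ≤ 3 := by nlinarith [sq_abs z.re, abs_nonneg z.re]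
  have hone : 1 ≤ (sqrtCut (z ^ 2 - 4)).im ^ 2 := him_sq ▸ one_le_half_sqrt_sub hre_sq
  refine ⟨him_sq, hone, ?_⟩
  simpa [abs_of_nonneg (sqrtCut_im_nonneg _)] using (one_le_sq_iff_one_le_abs _).mp hone

theorem stmt_11 (z : ℂ) (hz : 0 < z.im) (hre : |z.re| < 1) :
    (sqrtCut (z ^ 2 - 4)).im ^ 2 =
      (Real.sqrt ((z.re ^ 2 - z.im ^ 2 - 4) ^ 2 + 4 * z.re ^ 2 * z.im ^ 2)
        - (z.re ^ 2 - z.im ^ 2 - 4)) / 2 ∧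
    1 ≤ (sqrtCut (z ^ 2 - 4)).im ^ 2 ∧
    1 ≤ (sqrtCut (z ^ 2 - 4)).im :=
  stmt_11_general z hre
end
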